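/- In the minimization over zeta in C^{n+1} of Re<zeta, z> + omega(zeta) + (lambda/L)||zeta||_1, where omega(zeta) = (c/2)||zeta||_{tq}^2 for some c > 0 and 1 < tq <= 2, any optimal solution zeta* satisfies, at each coordinate j, the optimality condition c * ||zeta*||_{tq}^{2 - tq} * |zeta*_j|^{tq - 1} + (lambda/L) * 1{|zeta*_j| > 0} <= |z_j|, with equality when |zeta*_j| > 0, and moreover zeta*_j = -(z_j/|z_j|)|zeta*_j| whenever z_j != 0. -/

import Mathlib

open Complex Finset

/-- Split a sum over `Fin (n+1)` at coordinate `j`, for a function updated at `j`. -/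
lemma sum_update_split {n : ℕ} (F : Fin (n + 1) → ℂ → ℝ) (f : Fin (n + 1) → ℂ)
    (j : Fin (n + 1)) (w : ℂ) :
    ∑ i, F i (Function.update f j w i)
      = F j w + ∑ i ∈ Finset.univ.erase j, F i (f i) := by
  rw [← Finset.add_sum_erase _ _ (Finset.mem_univ j), Function.update_self]
  congr 1
  exact Finset.sum_congr rfl fun i hi => by
    rw [Function.update_of_ne (Finset.ne_of_mem_erase hi)]

/-- Split a sum over `Fin (n+1)` at coordinate `j`. -/
lemma sum_split {n : ℕ} (F : Fin (n + 1) → ℝ) (j : Fin (n + 1)) :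
    ∑ i, F i = F j + ∑ i ∈ Finset.univ.erase j, F i :=
  (Finset.add_sum_erase _ _ (Finset.mem_univ j)).symm

/-- If `Re(conj z * w) = -‖z‖‖w‖` with `z ≠ 0`, then `w = -(z/‖z‖)‖w‖`. -/
lemma phase_lemma (z w : ℂ) (hz : z ≠ 0)
    (hre : ((starRingEnd ℂ) z * w).re = -(‖z‖ * ‖w‖)) :
    w = -(z / (‖z‖ : ℂ)) * (‖w‖ : ℂ) := by
  have hzn : (0:ℝ) < ‖z‖ := norm_pos_iff.mpr hz
  have hcz : (starRingEnd ℂ) z ≠ 0 := by simpa using hz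
  set u := (starRingEnd ℂ) z * w with hu
  have hnu : ‖u‖ = ‖z‖ * ‖w‖ := by
    rw [hu, norm_mul, RCLike.norm_conj]
  have hsq : ‖u‖ ^ 2 = u.re ^ 2 + u.im ^ 2 := by
    rw [Complex.sq_norm, Complex.normSq_apply]; ring
  have him : u.im = 0 := by
    have h1 : u.re ^ 2 = ‖u‖ ^ 2 := by rw [hre, hnu]; ring
    have h2 : u.im ^ 2 = 0 := by linarith
    exact pow_eq_zero_iff (n := 2) (by norm_num) |>.mp h2
  have hueq : u = ((-(‖z‖ * ‖w‖) : ℝ) : ℂ) := by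
    apply Complex.ext
    · simpa using hre
    · simpa using him
  have hne : ((‖z‖ : ℝ) : ℂ) ≠ 0 := by
    simpa using hzn.ne'
  have hconj : (starRingEnd ℂ) z * z = (((‖z‖ : ℝ) : ℂ)) ^ 2 := by
    simpa using RCLike.conj_mul z
  apply mul_left_cancel₀ hcz
  rw [← hu, hueq]
  have hexp : (starRingEnd ℂ) z * (-(z / ((‖z‖ : ℝ) : ℂ)) * ((‖w‖ : ℝ) : ℂ))
      = -((starRingEnd ℂ) z * z * ((‖w‖ : ℝ) : ℂ) / ((‖z‖ : ℝ) : ℂ)) := by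
    ring
  rw [hexp, hconj, ← neg_div, eq_div_iff hne]
  push_cast
  ring

/-- First-order optimality conditions for the prox problem
`min_ζ Re⟨ζ,z⟩ + (c/2)‖ζ‖_{tq}² + (λ/L)‖ζ‖₁` with `1 < tq ≤ 2`, `c > 0`:
at every coordinate `j`,
`c‖ζ*‖_{tq}^{2-tq}|ζ*_j|^{tq-1} + (λ/L)·1{|ζ*_j|>0} ≤ |z_j|`, with equality
when `|ζ*_j| > 0`; moreover `ζ*_j = -(z_j/|z_j|)|ζ*_j|` whenever `z_j ≠ 0`. -/
theorem prox_optimality_conditions (n : ℕ) (z : Fin (n + 1) → ℂ)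
    (c tq lam L : ℝ) (hc : 0 < c) (htq1 : 1 < tq) (htq2 : tq ≤ 2)
    (hlam : 0 < lam) (hL : 0 < L)
    (h : (Fin (n + 1) → ℂ) → ℝ)
    (hh : ∀ ζ, h ζ = (∑ j, (starRingEnd ℂ) (z j) * ζ j).re
        + (c / 2) * ((∑ j, ‖ζ j‖ ^ tq) ^ (1 / tq)) ^ 2 + (lam / L) * ∑ j, ‖ζ j‖)
    (ζstar : Fin (n + 1) → ℂ) (hmin : ∀ ζ, h ζstar ≤ h ζ) :
    ∀ j : Fin (n + 1),
      (c * ((∑ i, ‖ζstar i‖ ^ tq) ^ (1 / tq)) ^ (2 - tq) * ‖ζstar j‖ ^ (tq - 1)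
          + (lam / L) * (if 0 < ‖ζstar j‖ then 1 else 0) ≤ ‖z j‖) ∧
      (0 < ‖ζstar j‖ →
        c * ((∑ i, ‖ζstar i‖ ^ tq) ^ (1 / tq)) ^ (2 - tq) * ‖ζstar j‖ ^ (tq - 1)
          + lam / L = ‖z j‖) ∧
      (z j ≠ 0 → ζstar j = -(z j / (‖z j‖ : ℂ)) * (‖ζstar j‖ : ℂ)) := by
  have htq0 : (0:ℝ) < tq := by linarith
  have htqne : tq ≠ 0 := ne_of_gt htq0
  intro j
  set a : ℝ := ‖z j‖ with ha
  set b : ℝ := lam / L with hb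
  set rstar : ℝ := ‖ζstar j‖ with hr
  set S : ℝ := ∑ i ∈ Finset.univ.erase j, ‖ζstar i‖ ^ tq with hS
  set T : ℝ := ∑ i ∈ Finset.univ.erase j, ‖ζstar i‖ with hT
  set A : ℝ := ∑ i ∈ Finset.univ.erase j, ((starRingEnd ℂ) (z i) * ζstar i).re with hA
  have hS0 : 0 ≤ S := Finset.sum_nonneg fun i _ => Real.rpow_nonneg (norm_nonneg _) _
  have hr0 : 0 ≤ rstar := norm_nonneg _
  have ha0 : 0 ≤ a := norm_nonneg _
  have hb0 : 0 < b := div_pos hlam hL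
  -- sums split at coordinate j for ζstar
  have hsumtq : ∑ i, ‖ζstar i‖ ^ tq = rstar ^ tq + S :=
    sum_split (fun i => ‖ζstar i‖ ^ tq) j
  have hsum1 : ∑ i, ‖ζstar i‖ = rstar + T :=
    sum_split (fun i => ‖ζstar i‖) j
  have hsumre : ∑ i, ((starRingEnd ℂ) (z i) * ζstar i).re
      = ((starRingEnd ℂ) (z j) * ζstar j).re + A :=
    sum_split (fun i => ((starRingEnd ℂ) (z i) * ζstar i).re) j
  -- key algebraic computation
  have hkey : ∀ r : ℝ, z j ≠ 0 →
      (starRingEnd ℂ) (z j) * (-(z j / ((‖z j‖ : ℝ) : ℂ)) * (r : ℂ)) = ((-(a * r) : ℝ) : ℂ) := by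
    intro r hz
    have hzn : (0:ℝ) < a := norm_pos_iff.mpr hz
    have hne : ((a : ℝ) : ℂ) ≠ 0 := by
      simpa using hzn.ne'
    have hconj : (starRingEnd ℂ) (z j) * z j = (((a : ℝ) : ℂ)) ^ 2 := by
      simpa [ha] using RCLike.conj_mul (z j)
    rw [← ha]
    have hexp : (starRingEnd ℂ) (z j) * (-(z j / ((a : ℝ) : ℂ)) * (r : ℂ))
        = -((starRingEnd ℂ) (z j) * z j * (r : ℂ) / ((a : ℝ) : ℂ)) := by
      ring
    rw [hexp, hconj, ← neg_div, div_eq_iff hne]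
    push_cast
    ring
  have hpow : ∀ X : ℝ, 0 ≤ X → ((X ^ (1 / tq)) ^ 2 : ℝ) = X ^ (2 / tq) := by
    intro X hX
    rw [← Real.rpow_natCast (X ^ (1 / tq)) 2, ← Real.rpow_mul hX]
    congr 1
    push_cast
    ring
  -- Part 3 : phase condition
  have part3 : z j ≠ 0 → ζstar j = -(z j / (‖z j‖ : ℂ)) * (‖ζstar j‖ : ℂ) := by
    intro hz
    have hzn : (0:ℝ) < a := norm_pos_iff.mpr hz
    set w : ℂ := -(z j / ((‖z j‖ : ℝ) : ℂ)) * ((rstar : ℝ) : ℂ) with hw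
    have hwnorm : ‖w‖ = rstar := by
      rw [hw, norm_mul, norm_neg, norm_div, Complex.norm_real, Complex.norm_real,
        Real.norm_eq_abs, Real.norm_eq_abs, _root_.abs_of_nonneg hr0,
        _root_.abs_of_nonneg (norm_nonneg (z j)), ← ha, div_self hzn.ne', one_mul]
    have e1 : ∑ i, ‖Function.update ζstar j w i‖ ^ tq = ‖w‖ ^ tq + S :=
      sum_update_split (fun i x => ‖x‖ ^ tq) ζstar j w
    have e2 : ∑ i, ‖Function.update ζstar j w i‖ = ‖w‖ + T :=
      sum_update_split (fun i x => ‖x‖) ζstar j w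
    have e3 : (∑ i, ((starRingEnd ℂ) (z i) * Function.update ζstar j w i)).re
        = ((starRingEnd ℂ) (z j) * w).re + A := by
      rw [Complex.re_sum]
      exact sum_update_split (fun i x => ((starRingEnd ℂ) (z i) * x).re) ζstar j w
    have e4 : (∑ i, ((starRingEnd ℂ) (z i) * ζstar i)).re
        = ((starRingEnd ℂ) (z j) * ζstar j).re + A := by
      rw [Complex.re_sum]; exact hsumre
    have hcomp := hmin (Function.update ζstar j w)
    rw [hh, hh, e1, e2, e3, e4, hwnorm, hsumtq, hsum1] at hcomp
    have hcw : ((starRingEnd ℂ) (z j) * w).re = -(a * rstar) := by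
      rw [hw, hkey rstar hz, Complex.ofReal_re]
    have hb1 : ((starRingEnd ℂ) (z j) * ζstar j).re ≤ -(a * rstar) := by
      rw [← hcw]; linarith
    have hnm : ‖(starRingEnd ℂ) (z j) * ζstar j‖ = a * rstar := by
      rw [norm_mul, RCLike.norm_conj, ← ha, ← hr]
    have hb2 : -(a * rstar) ≤ ((starRingEnd ℂ) (z j) * ζstar j).re := by
      have h2 := Complex.abs_re_le_norm ((starRingEnd ℂ) (z j) * ζstar j)
      rw [hnm] at h2
      linarith [(abs_le.mp h2).1]
    exact phase_lemma (z j) (ζstar j) hz (by rw [← ha, ← hr]; linarith)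
  -- the one-variable function
  set φ : ℝ → ℝ := fun r => -(a * r) + (c / 2) * (r ^ tq + S) ^ (2 / tq) + b * (r + T)
    with hφ
  have hφr : ∀ r : ℝ, φ r = -(a * r) + (c / 2) * (r ^ tq + S) ^ (2 / tq) + b * (r + T) :=
    fun r => rfl
  set wd : ℂ := if z j = 0 then 1 else -(z j / ((‖z j‖ : ℝ) : ℂ)) with hwd
  have hwdnorm : ‖wd‖ = 1 := by
    rw [hwd]
    split_ifs with hz
    · simp
    · have hzn : (0:ℝ) < ‖z j‖ := norm_pos_iff.mpr hz
      rw [norm_neg, norm_div, Complex.norm_real, Real.norm_eq_abs,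
        _root_.abs_of_nonneg (norm_nonneg (z j))]
      exact div_self hzn.ne'
  have hrewd : ∀ r : ℝ, ((starRingEnd ℂ) (z j) * (wd * (r : ℂ))).re = -(a * r) := by
    intro r
    rw [hwd]
    split_ifs with hz
    · simp [hz, ha]
    · rw [hkey r hz, Complex.ofReal_re]
  have hval : ∀ r : ℝ, 0 < r →
      h (Function.update ζstar j (wd * (r : ℂ))) = A + φ r := by
    intro r hrpos
    have hwn : ‖wd * (r : ℂ)‖ = r := by
      rw [norm_mul, hwdnorm, one_mul, Complex.norm_real, Real.norm_eq_abs,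
        _root_.abs_of_pos hrpos]
    have e1 : ∑ i, ‖Function.update ζstar j (wd * (r : ℂ)) i‖ ^ tq
        = ‖wd * (r : ℂ)‖ ^ tq + S :=
      sum_update_split (fun i x => ‖x‖ ^ tq) ζstar j _
    have e2 : ∑ i, ‖Function.update ζstar j (wd * (r : ℂ)) i‖ = ‖wd * (r : ℂ)‖ + T :=
      sum_update_split (fun i x => ‖x‖) ζstar j _
    have e3 : (∑ i, ((starRingEnd ℂ) (z i) * Function.update ζstar j (wd * (r : ℂ)) i)).re
        = ((starRingEnd ℂ) (z j) * (wd * (r : ℂ))).re + A := by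
      rw [Complex.re_sum]
      exact sum_update_split (fun i x => ((starRingEnd ℂ) (z i) * x).re) ζstar j _
    rw [hh, e1, e2, e3, hwn, hrewd r, hpow (r ^ tq + S) (add_nonneg (Real.rpow_nonneg hrpos.le tq) hS0), hφr]
    ring
  have hstar : h ζstar = A + φ rstar := by
    have hreζ : ((starRingEnd ℂ) (z j) * ζstar j).re = -(a * rstar) := by
      by_cases hz : z j = 0
      · simp [hz, ha]
      · rw [part3 hz, hkey rstar hz, Complex.ofReal_re]
    have e4 : (∑ i, ((starRingEnd ℂ) (z i) * ζstar i)).re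
        = ((starRingEnd ℂ) (z j) * ζstar j).re + A := by
      rw [Complex.re_sum]; exact hsumre
    rw [hh, e4, hsumtq, hsum1, hreζ, hpow (rstar ^ tq + S) (add_nonneg (Real.rpow_nonneg hr0 tq) hS0), hφr]
    ring
  by_cases hpos : 0 < rstar
  · -- interior case: first-order condition
    have hle : ∀ r ∈ Set.Ioi (0:ℝ), φ rstar ≤ φ r := by
      intro r hr'
      have h1 := hmin (Function.update ζstar j (wd * (r : ℂ)))
      rw [hval r hr', hstar] at h1
      linarith
    have hloc : IsLocalMin φ rstar :=
      Filter.eventually_of_mem (isOpen_Ioi.mem_nhds hpos) (fun r hr' => hle r hr')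
    have hXpos : 0 < rstar ^ tq + S := by
      have := Real.rpow_pos_of_pos hpos tq
      linarith
    have h1 : HasDerivAt (fun r : ℝ => r ^ tq) (tq * rstar ^ (tq - 1)) rstar :=
      Real.hasDerivAt_rpow_const (Or.inl hpos.ne')
    have h2 : HasDerivAt (fun r : ℝ => r ^ tq + S) (tq * rstar ^ (tq - 1)) rstar :=
      h1.add_const S
    have h3 : HasDerivAt (fun x : ℝ => x ^ (2 / tq))
        ((2 / tq) * (rstar ^ tq + S) ^ (2 / tq - 1)) (rstar ^ tq + S) :=
      Real.hasDerivAt_rpow_const (Or.inl hXpos.ne')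
    have h4 : HasDerivAt (fun r : ℝ => (r ^ tq + S) ^ (2 / tq))
        ((2 / tq) * (rstar ^ tq + S) ^ (2 / tq - 1) * (tq * rstar ^ (tq - 1))) rstar :=
      by have := h3.comp rstar h2; exact this
    have h5 : HasDerivAt (fun r : ℝ => -(a * r)) (-(a * 1)) rstar :=
      ((hasDerivAt_id rstar).const_mul a).neg
    have h6 : HasDerivAt (fun r : ℝ => b * (r + T)) (b * 1) rstar :=
      ((hasDerivAt_id rstar).add_const T).const_mul b
    have hφ' : HasDerivAt φ
        (-(a * 1) + (c / 2) * ((2 / tq) * (rstar ^ tq + S) ^ (2 / tq - 1)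
          * (tq * rstar ^ (tq - 1))) + b * 1) rstar := by
      rw [hφ]
      exact (h5.add (h4.const_mul (c / 2))).add h6
    have hD := hloc.hasDerivAt_eq_zero hφ'
    have e : (c / 2) * ((2 / tq) * (rstar ^ tq + S) ^ (2 / tq - 1) * (tq * rstar ^ (tq - 1)))
        = c * (rstar ^ tq + S) ^ (2 / tq - 1) * rstar ^ (tq - 1) := by
      field_simp
    have hkey2 : c * (rstar ^ tq + S) ^ (2 / tq - 1) * rstar ^ (tq - 1) + b = a := by
      rw [e] at hD
      linarith
    have hN : ((rstar ^ tq + S) ^ (1 / tq)) ^ (2 - tq) = (rstar ^ tq + S) ^ (2 / tq - 1) := by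
      rw [← Real.rpow_mul hXpos.le]
      congr 1
      field_simp
    have hfinal : c * ((∑ i, ‖ζstar i‖ ^ tq) ^ (1 / tq)) ^ (2 - tq) * rstar ^ (tq - 1) + b
        = a := by
      rw [hsumtq, hN]
      exact hkey2
    refine ⟨?_, fun _ => hfinal, part3⟩
    rw [if_pos hpos, mul_one]
    exact le_of_eq hfinal
  · -- boundary case : ζstar j = 0
    have hrz : rstar = 0 := le_antisymm (not_lt.mp hpos) hr0
    refine ⟨?_, fun hcon => absurd hcon hpos, part3⟩
    rw [if_neg hpos, hrz, Real.zero_rpow (by intro hcon; linarith : tq - 1 ≠ 0)]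
    simpa using ha0
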